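/- Let n ≥ 2, let C, D ∈ ℝ^{n×n} be symmetric, and fix V ∈ ℝ^{n×(n−1)} with Vᵀ·1 = 0 and Vᵀ V = I_{n−1}. With OGW(C,D) := (1/n²)(‖C‖_F² + ‖D‖_F² − 2·sup_{P ∈ O_n ∩ E_n} tr(C P D Pᵀ)), OGW_o(C,D) := (1/n²)(‖C‖_F² + ‖D‖_F² − 2·sup_{P ∈ O_n} tr(C P D Pᵀ)), and OGW_lb(C,D) := (1/n²)·[ ‖C‖_F² + ‖D‖_F² − 2·Σ_{i=1}^{n−1} λᵢ↓(Vᵀ C V)·λᵢ↓(Vᵀ D V) − (4/n)·‖Vᵀ C 1‖·‖Vᵀ D 1‖ − (2/n²)·(1ᵀ C 1)(1ᵀ D 1) ], one has both OGW_o(C,D) ≤ OGW(C,D) and OGW_lb(C,D) ≤ OGW(C,D). -/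

import Mathlib

open Matrix BigOperators

noncomputable section

/-- Squared Frobenius norm of a real matrix. -/
def frobSq {m n : ℕ} (A : Matrix (Fin m) (Fin n) ℝ) : ℝ := ∑ i, ∑ j, (A i j) ^ 2

/-- Euclidean norm of a real vector. -/
def vnorm {n : ℕ} (v : Fin n → ℝ) : ℝ := Real.sqrt (∑ i, (v i) ^ 2)

/-- Eigenvalues of a real symmetric (Hermitian) matrix, listed in descending order. -/
def eigDesc {n : ℕ} {A : Matrix (Fin n) (Fin n) ℝ} (hA : A.IsHermitian) : Fin n → ℝ :=
  fun i => (hA.eigenvalues ∘ Tuple.sort hA.eigenvalues) i.rev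

/-- Conjugating a real symmetric (Hermitian) matrix preserves symmetry. -/
theorem conjHerm {n m : ℕ} (V : Matrix (Fin n) (Fin m) ℝ) {C : Matrix (Fin n) (Fin n) ℝ}
    (hC : C.IsHermitian) : (Vᵀ * C * V).IsHermitian := by
  have h := Matrix.isHermitian_mul_mul_conjTranspose Vᵀ hC
  simpa using h


/-- The set `O_n ∩ E_n` of orthogonal matrices whose row and column sums all equal `1`. -/
def OE (n : ℕ) : Set (Matrix (Fin n) (Fin n) ℝ) :=
  {P | Pᵀ * P = 1 ∧ (P *ᵥ (fun _ => (1 : ℝ)) = fun _ => 1)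
    ∧ (Pᵀ *ᵥ (fun _ => (1 : ℝ)) = fun _ => 1)}

/-- The orthogonal Gromov-Wasserstein discrepancy `OGW`. -/
def OGW (n : ℕ) (C D : Matrix (Fin n) (Fin n) ℝ) : ℝ :=
  (1 / (n : ℝ) ^ 2) * (frobSq C + frobSq D
    - 2 * sSup ((fun P => Matrix.trace (C * P * D * Pᵀ)) '' (OE n)))


/-- The closed-form lower bound `OGW_lb` of the orthogonal Gromov-Wasserstein discrepancy. -/
def OGWlb {n : ℕ} (V : Matrix (Fin n) (Fin (n - 1)) ℝ)
    (C D : Matrix (Fin n) (Fin n) ℝ) (hC : C.IsHermitian) (hD : D.IsHermitian) : ℝ :=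
  (1 / (n : ℝ) ^ 2) * (frobSq C + frobSq D
    - 2 * ∑ i, eigDesc (conjHerm V hC) i * eigDesc (conjHerm V hD) i
    - (4 / (n : ℝ)) * vnorm ((Vᵀ * C) *ᵥ (fun _ => (1 : ℝ)))
        * vnorm ((Vᵀ * D) *ᵥ (fun _ => (1 : ℝ)))
    - (2 / (n : ℝ) ^ 2) * ((∑ i, ∑ j, C i j) * (∑ i, ∑ j, D i j)))


/-- The relaxation `OGW_o`, optimizing the coupling over all orthogonal matrices. -/
def OGWo (n : ℕ) (C D : Matrix (Fin n) (Fin n) ℝ) : ℝ :=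
  (1 / (n : ℝ) ^ 2) * (frobSq C + frobSq D
    - 2 * sSup ((fun P => Matrix.trace (C * P * D * Pᵀ)) ''
        {P : Matrix (Fin n) (Fin n) ℝ | Pᵀ * P = 1}))

/-!
For `P ∈ O_n ∩ E_n` the all-ones vector `𝟙` is fixed by `P` and `Pᵀ`. Since `[V, 𝟙/√n]` is
orthogonal, `V Vᵀ = 1 - E` with `E = 𝟙𝟙ᵀ/n`, and `P = V Q Vᵀ + E` for the orthogonal matrix
`Q = Vᵀ P V`. Expanding,
`tr(C P D Pᵀ) = tr(Ĉ Q D̂ Qᵀ) + (2/n) ⟨Vᵀ C 𝟙, Q Vᵀ D 𝟙⟩ + (𝟙ᵀ C 𝟙)(𝟙ᵀ D 𝟙)/n²`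
with `Ĉ = Vᵀ C V`, `D̂ = Vᵀ D V`. The first term is at most `∑ λᵢ↓(Ĉ) λᵢ↓(D̂)` by von Neumann's
trace inequality, the second at most `(2/n) ‖Vᵀ C 𝟙‖ ‖Vᵀ D 𝟙‖` by Cauchy–Schwarz; this bounds the
supremum defining `OGW`. Von Neumann's inequality is proved by writing the trace as
`a ⬝ᵥ (R ⊙ R) *ᵥ b` for eigenvalue vectors `a`, `b` and an orthogonal `R`: `R ⊙ R` is doubly
stochastic, and by Birkhoff's theorem and the rearrangement inequality `S ↦ a ⬝ᵥ S *ᵥ b` is maximal at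
the identity once `a` and `b` are sorted. The same inequality shows the supremum over `O_n` is
finite, so it dominates the supremum over the smaller set `O_n ∩ E_n`.
-/

namespace Matrix

variable {ι : Type*} [Fintype ι] [DecidableEq ι]

theorem dotProduct_mulVec_le_of_mem_doublyStochastic {a b : ι → ℝ} (hab : Monovary a b)
    {S : Matrix ι ι ℝ} (hS : S ∈ doublyStochastic ℝ ι) : a ⬝ᵥ S *ᵥ b ≤ a ⬝ᵥ b := by
  let f : Matrix ι ι ℝ →ₗ[ℝ] ℝ :=
    { toFun := fun M => a ⬝ᵥ M *ᵥ b
      map_add' := fun M N => by simp [add_mulVec, dotProduct_add]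
      map_smul' := fun c M => by simp [smul_mulVec, dotProduct_smul] }
  rw [← SetLike.mem_coe, doublyStochastic_eq_convexHull_permMatrix] at hS
  obtain ⟨_, ⟨σ, rfl⟩, hσ⟩ := (f.convexOn convex_univ).exists_ge_of_mem_convexHull (by simp) hS
  calc a ⬝ᵥ S *ᵥ b ≤ a ⬝ᵥ σ.permMatrix ℝ *ᵥ b := hσ
    _ = ∑ i, a i * b (σ i) := by rw [permMatrix_mulVec]; rfl
    _ ≤ a ⬝ᵥ b := hab.sum_mul_comp_perm_le_sum_mul

theorem hadamard_self_mem_doublyStochastic {R : Matrix ι ι ℝ} (hR : Rᵀ * R = 1) :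
    R ⊙ R ∈ doublyStochastic ℝ ι := by
  have hR' : R * Rᵀ = 1 := mul_eq_one_comm.mp hR
  refine mem_doublyStochastic.mpr ⟨fun i j => mul_self_nonneg (R i j), ?_, ?_⟩
  · funext i
    simpa [mulVec, dotProduct, mul_apply] using congrFun (congrFun hR' i) i
  · funext j
    simpa [vecMul, dotProduct, mul_apply] using congrFun (congrFun hR j) j

theorem trace_diagonal_mul_mul_diagonal_mul_transpose (a b : ι → ℝ) (R : Matrix ι ι ℝ) :
    trace (diagonal a * R * diagonal b * Rᵀ) = a ⬝ᵥ (R ⊙ R) *ᵥ b := by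
  simp only [trace, diag_apply, mul_apply, diagonal_apply, transpose_apply, ite_mul, zero_mul,
    mul_ite, mul_zero, Finset.sum_ite_eq, Finset.sum_ite_eq', Finset.mem_univ, if_true,
    dotProduct, mulVec, hadamard_apply, Finset.mul_sum]
  exact Finset.sum_congr rfl fun i _ => Finset.sum_congr rfl fun j _ => by ring

theorem IsHermitian.exists_eq_mul_diagonal_mul_transpose {A : Matrix ι ι ℝ} (hA : A.IsHermitian) :
    ∃ U : Matrix ι ι ℝ, Uᵀ * U = 1 ∧ A = U * diagonal hA.eigenvalues * Uᵀ := by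
  refine ⟨hA.eigenvectorUnitary, ?_, ?_⟩
  · simpa [star_eq_conjTranspose] using (Unitary.mem_iff.mp hA.eigenvectorUnitary.2).1
  · simpa [Unitary.conjStarAlgAut_apply, star_eq_conjTranspose] using hA.spectral_theorem

theorem exists_mem_doublyStochastic_trace_eq {U W Q : Matrix ι ι ℝ}
    (hU : Uᵀ * U = 1) (hW : Wᵀ * W = 1) (hQ : Qᵀ * Q = 1) (a b : ι → ℝ) :
    ∃ S ∈ doublyStochastic ℝ ι,
      trace (U * diagonal a * Uᵀ * Q * (W * diagonal b * Wᵀ) * Qᵀ) = a ⬝ᵥ S *ᵥ b := by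
  set R := Uᵀ * Q * W
  have hR : Rᵀ * R = 1 := by
    have hU' : U * Uᵀ = 1 := mul_eq_one_comm.mp hU
    simp only [R, transpose_mul, transpose_transpose, Matrix.mul_assoc]
    simp only [← Matrix.mul_assoc U, hU', Matrix.one_mul, ← Matrix.mul_assoc Qᵀ, hQ, hW]
  refine ⟨R ⊙ R, hadamard_self_mem_doublyStochastic hR, ?_⟩
  rw [← trace_diagonal_mul_mul_diagonal_mul_transpose]
  simpa [R, Matrix.mul_assoc] using
    trace_mul_comm U (diagonal a * Uᵀ * Q * W * diagonal b * Wᵀ * Qᵀ)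

end Matrix

theorem eigDesc_antitone {n : ℕ} {A : Matrix (Fin n) (Fin n) ℝ} (hA : A.IsHermitian) :
    Antitone (eigDesc hA) :=
  fun _ _ hij => Tuple.monotone_sort hA.eigenvalues (Fin.rev_le_rev.mpr hij)

theorem exists_eigenvalues_eq_eigDesc_comp {n : ℕ} {A : Matrix (Fin n) (Fin n) ℝ}
    (hA : A.IsHermitian) : ∃ π : Equiv.Perm (Fin n), hA.eigenvalues = eigDesc hA ∘ π :=
  ⟨(Tuple.sort hA.eigenvalues)⁻¹.trans Fin.revPerm, by ext; simp [eigDesc]⟩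

theorem trace_mul_mul_mul_transpose_le_sum_eigDesc {k : ℕ} {A B Q : Matrix (Fin k) (Fin k) ℝ}
    (hA : A.IsHermitian) (hB : B.IsHermitian) (hQ : Qᵀ * Q = 1) :
    trace (A * Q * B * Qᵀ) ≤ ∑ i, eigDesc hA i * eigDesc hB i := by
  obtain ⟨U, hU, hAU⟩ := hA.exists_eq_mul_diagonal_mul_transpose
  obtain ⟨W, hW, hBW⟩ := hB.exists_eq_mul_diagonal_mul_transpose
  obtain ⟨S, hS, htr⟩ :=
    exists_mem_doublyStochastic_trace_eq hU hW hQ hA.eigenvalues hB.eigenvalues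
  obtain ⟨π₁, h₁⟩ := exists_eigenvalues_eq_eigDesc_comp hA
  obtain ⟨π₂, h₂⟩ := exists_eigenvalues_eq_eigDesc_comp hB
  calc trace (A * Q * B * Qᵀ) = hA.eigenvalues ⬝ᵥ S *ᵥ hB.eigenvalues := by
        rw [← htr, ← hAU, ← hBW]
    _ = eigDesc hA ⬝ᵥ S.reindex π₁ π₂ *ᵥ eigDesc hB := by
        rw [h₁, h₂, reindex_apply, submatrix_mulVec_equiv, dotProduct_comp_equiv_symm]
        rfl
    _ ≤ eigDesc hA ⬝ᵥ eigDesc hB :=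
        dotProduct_mulVec_le_of_mem_doublyStochastic
          ((eigDesc_antitone hA).monovary (eigDesc_antitone hB)) (reindex_mem_doublyStochastic hS)

namespace Matrix

variable {ι κ : Type*} [Fintype ι] [DecidableEq ι] [Fintype κ] [DecidableEq κ]

theorem eq_zero_of_isIdempotentElem_of_trace_eq_zero {K : Type*} [Field K] [CharZero K]
    {N : Matrix ι ι K} (hN : IsIdempotentElem N) (htr : N.trace = 0) : N = 0 := by
  simpa using LinearMap.IsIdempotentElem.eq_zero_of_trace_eq_zero
    (hN.map (toLinAlgEquiv' (R := K) (n := ι))) ((trace_toLin'_eq N).trans htr)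

theorem mul_transpose_add_smul_vecMulVec_one_eq_one {V : Matrix ι κ ℝ}
    (hV1 : Vᵀ *ᵥ 1 = 0) (hV : Vᵀ * V = 1) (hcard : Fintype.card κ + 1 = Fintype.card ι) :
    V * Vᵀ + (Fintype.card ι : ℝ)⁻¹ • vecMulVec 1 1 = 1 := by
  have hn : (Fintype.card ι : ℝ) ≠ 0 := by rw [← hcard]; positivity
  set J : Matrix ι ι ℝ := vecMulVec 1 1
  have hVJ : Vᵀ * J = 0 := by rw [mul_vecMulVec, hV1, zero_vecMulVec]
  have hJV : J * V = 0 := by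
    rw [vecMulVec_mul, ← mulVec_transpose, hV1]
    simp
  have hJJ : J * J = (Fintype.card ι : ℝ) • J := by
    rw [vecMulVec_mul, vecMul_vecMulVec]
    simp [dotProduct, J, vecMulVec_smul]
  -- `V Vᵀ + J / n` is idempotent of trace `(n - 1) + 1 = n`, so its complement vanishes.
  have hidem : IsIdempotentElem (V * Vᵀ + (Fintype.card ι : ℝ)⁻¹ • J) := by
    simp only [IsIdempotentElem, Matrix.mul_add, Matrix.add_mul, Matrix.mul_smul, Matrix.smul_mul,
      Matrix.mul_assoc, hV, Matrix.one_mul, hVJ, ← Matrix.mul_assoc _ V,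
      hJV, hJJ, Matrix.zero_mul, Matrix.mul_zero, smul_zero, smul_smul]
    rw [inv_mul_cancel₀ hn]
    simp
  have htr : trace (1 - (V * Vᵀ + (Fintype.card ι : ℝ)⁻¹ • J)) = 0 := by
    rw [trace_sub, trace_add, trace_smul, trace_mul_comm, hV, trace_vecMulVec]
    have hk : (Fintype.card κ : ℝ) + 1 ≠ 0 := by positivity
    simp [dotProduct, ← hcard, inv_mul_cancel₀ hk]
  exact (sub_eq_zero.mp (eq_zero_of_isIdempotentElem_of_trace_eq_zero hidem.one_sub htr)).symm

theorem mul_transpose_mul_mul_mul_transpose_add_eq {V : Matrix ι κ ℝ} {E P : Matrix ι ι ℝ}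
    (hV : Vᵀ * V = 1) (hVE : V * Vᵀ = 1 - E) (hPE : P * E = E) (hEP : E * P = E) :
    V * (Vᵀ * P * V) * Vᵀ + E = P := by
  have hEE : E * E = E := by
    have h : (V * Vᵀ) * (V * Vᵀ) = V * Vᵀ := by
      rw [Matrix.mul_assoc, ← Matrix.mul_assoc Vᵀ, hV, Matrix.one_mul]
    rw [hVE] at h
    calc E * E = (1 - E) * (1 - E) - (1 - E) + E := by noncomm_ring
      _ = E := by rw [h]; abel
  calc V * (Vᵀ * P * V) * Vᵀ + E = (V * Vᵀ) * P * (V * Vᵀ) + E := by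
        simp only [Matrix.mul_assoc]
    _ = P - E * P - P * E + E * P * E + E := by rw [hVE]; noncomm_ring
    _ = P := by rw [hEP, hPE, hEE]; abel

theorem transpose_mul_mul_mul_transpose_mul_mul_eq_one {V : Matrix ι κ ℝ} {E P : Matrix ι ι ℝ}
    (hV : Vᵀ * V = 1) (hVE : V * Vᵀ = 1 - E) (hP : Pᵀ * P = 1) (hPE : Pᵀ * E = E) :
    (Vᵀ * P * V)ᵀ * (Vᵀ * P * V) = 1 := by
  have hVtE : Vᵀ * E = 0 := by
    rw [← sub_sub_cancel 1 E, ← hVE, Matrix.mul_sub, Matrix.mul_one, ← Matrix.mul_assoc, hV,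
      Matrix.one_mul, sub_self]
  calc (Vᵀ * P * V)ᵀ * (Vᵀ * P * V) = Vᵀ * Pᵀ * (V * Vᵀ) * P * V := by
        simp only [transpose_mul, transpose_transpose, Matrix.mul_assoc]
    _ = Vᵀ * (Pᵀ * P) * V - Vᵀ * (Pᵀ * E) * P * V := by
        rw [hVE]; simp only [Matrix.mul_sub, Matrix.sub_mul, Matrix.mul_one, Matrix.mul_assoc]
    _ = 1 := by rw [hP, hPE, hVtE, Matrix.mul_one, hV]; simp

end Matrix

theorem Matrix.trace_mul_add_smul_vecMulVec_mul_transpose {ι : Type*} [Fintype ι]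
    {C D : Matrix ι ι ℝ} (hC : Cᵀ = C) (hD : Dᵀ = D) (X : Matrix ι ι ℝ) (c : ℝ) :
    trace (C * (X + c • vecMulVec 1 1) * D * (X + c • vecMulVec 1 1)ᵀ)
      = trace (C * X * D * Xᵀ) + 2 * c * ((C *ᵥ 1) ⬝ᵥ X *ᵥ (D *ᵥ 1))
        + c ^ 2 * ((1 ⬝ᵥ C *ᵥ 1) * (1 ⬝ᵥ D *ᵥ 1)) := by
  have h1C : (1 : ι → ℝ) ᵥ* C = C *ᵥ 1 := by rw [← mulVec_transpose, hC]
  have h1D : (1 : ι → ℝ) ᵥ* D = D *ᵥ 1 := by rw [← mulVec_transpose, hD]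
  simp only [transpose_add, transpose_smul, transpose_vecMulVec, Matrix.mul_add, Matrix.add_mul,
    Matrix.mul_smul, Matrix.smul_mul, trace_add, trace_smul, mul_vecMulVec, vecMulVec_mul,
    trace_vecMulVec, smul_eq_mul]
  have hXt : (D *ᵥ 1) ᵥ* Xᵀ = X *ᵥ D *ᵥ 1 := vecMul_transpose _ _
  have hcross : (C * X * D) *ᵥ 1 ⬝ᵥ 1 = (C *ᵥ 1) ⬝ᵥ X *ᵥ D *ᵥ 1 := by
    rw [dotProduct_comm, ← mulVec_mulVec, ← mulVec_mulVec, dotProduct_mulVec, h1C]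
  have hconst : vecMulVec (C *ᵥ 1) (D *ᵥ 1) *ᵥ 1 ⬝ᵥ 1 = (1 ⬝ᵥ C *ᵥ 1) * (1 ⬝ᵥ D *ᵥ 1) := by
    rw [vecMulVec_mulVec]
    simp [dotProduct_comm, mul_comm]
  rw [h1D, hXt, add_mulVec, add_dotProduct, hcross, smul_mulVec, smul_dotProduct, hconst,
    smul_eq_mul]
  ring

theorem dotProduct_le_vnorm_mul_vnorm {k : ℕ} (v w : Fin k → ℝ) :
    v ⬝ᵥ w ≤ vnorm v * vnorm w := by
  simpa [dotProduct, vnorm] using Real.sum_mul_le_sqrt_mul_sqrt Finset.univ v w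

theorem vnorm_mulVec_of_transpose_mul_self {k : ℕ} {Q : Matrix (Fin k) (Fin k) ℝ}
    (hQ : Qᵀ * Q = 1) (v : Fin k → ℝ) : vnorm (Q *ᵥ v) = vnorm v := by
  have h : (Q *ᵥ v) ⬝ᵥ (Q *ᵥ v) = v ⬝ᵥ v := by
    rw [dotProduct_mulVec, ← mulVec_transpose, mulVec_mulVec, hQ, one_mulVec]
  simpa [vnorm, dotProduct, pow_two] using congrArg Real.sqrt h

theorem dotProduct_mulVec_le_vnorm_mul_vnorm {k : ℕ} {Q : Matrix (Fin k) (Fin k) ℝ}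
    (hQ : Qᵀ * Q = 1) (u v : Fin k → ℝ) : u ⬝ᵥ Q *ᵥ v ≤ vnorm u * vnorm v :=
  (dotProduct_le_vnorm_mul_vnorm u (Q *ᵥ v)).trans_eq
    (by rw [vnorm_mulVec_of_transpose_mul_self hQ])

theorem one_mem_OE (n : ℕ) : 1 ∈ OE n := by
  simp [OE]

theorem trace_le_of_mem_OE {n m : ℕ} (hnm : m + 1 = n) {C D : Matrix (Fin n) (Fin n) ℝ}
    (hC : C.IsHermitian) (hD : D.IsHermitian) {V : Matrix (Fin n) (Fin m) ℝ}
    (hV1 : Vᵀ *ᵥ 1 = 0) (hV : Vᵀ * V = 1) {P : Matrix (Fin n) (Fin n) ℝ} (hP : P ∈ OE n) :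
    trace (C * P * D * Pᵀ) ≤ ∑ i, eigDesc (conjHerm V hC) i * eigDesc (conjHerm V hD) i
      + 2 / n * vnorm ((Vᵀ * C) *ᵥ 1) * vnorm ((Vᵀ * D) *ᵥ 1)
      + 1 / n ^ 2 * ((∑ i, ∑ j, C i j) * (∑ i, ∑ j, D i j)) := by
  obtain ⟨hPP, hP1, hPt1⟩ : Pᵀ * P = 1 ∧ P *ᵥ 1 = 1 ∧ Pᵀ *ᵥ 1 = 1 := hP
  have hCt : Cᵀ = C := by simpa using hC.eq
  have hDt : Dᵀ = D := by simpa using hD.eq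
  set E : Matrix (Fin n) (Fin n) ℝ := (n : ℝ)⁻¹ • vecMulVec 1 1 with hE
  have hVE : V * Vᵀ = 1 - E := by
    rw [eq_sub_iff_add_eq, hE]
    simpa using mul_transpose_add_smul_vecMulVec_one_eq_one hV1 hV (by simpa using hnm)
  have hPE : P * E = E := by rw [hE, Matrix.mul_smul, mul_vecMulVec, hP1]
  have hPtE : Pᵀ * E = E := by rw [hE, Matrix.mul_smul, mul_vecMulVec, hPt1]
  have hEP : E * P = E := by rw [hE, Matrix.smul_mul, vecMulVec_mul, ← mulVec_transpose, hPt1]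
  set Q := Vᵀ * P * V
  have hQ : Qᵀ * Q = 1 := transpose_mul_mul_mul_transpose_mul_mul_eq_one hV hVE hPP hPtE
  rw [← mul_transpose_mul_mul_mul_transpose_add_eq hV hVE hPE hEP, hE,
    trace_mul_add_smul_vecMulVec_mul_transpose hCt hDt]
  have hquad : trace (C * (V * Q * Vᵀ) * D * (V * Q * Vᵀ)ᵀ)
      = trace ((Vᵀ * C * V) * Q * (Vᵀ * D * V) * Qᵀ) := by
    simpa [Matrix.mul_assoc] using trace_mul_comm (C * V * Q * Vᵀ * D * V * Qᵀ) Vᵀ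
  have hlin : (C *ᵥ 1) ⬝ᵥ (V * Q * Vᵀ) *ᵥ (D *ᵥ 1)
      = ((Vᵀ * C) *ᵥ 1) ⬝ᵥ Q *ᵥ ((Vᵀ * D) *ᵥ 1) := by
    simp only [← mulVec_mulVec]
    rw [dotProduct_mulVec, ← mulVec_transpose]
  have hsum (A : Matrix (Fin n) (Fin n) ℝ) : 1 ⬝ᵥ A *ᵥ 1 = ∑ i, ∑ j, A i j := by
    simp [dotProduct, mulVec]
  rw [hquad, hlin, hsum, hsum, ← div_eq_mul_inv, inv_pow, ← one_div]
  have hvN := trace_mul_mul_mul_transpose_le_sum_eigDesc (conjHerm V hC) (conjHerm V hD) hQ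
  have hCS := mul_le_mul_of_nonneg_left
    (dotProduct_mulVec_le_vnorm_mul_vnorm hQ ((Vᵀ * C) *ᵥ 1) ((Vᵀ * D) *ᵥ 1))
    (by positivity : (0 : ℝ) ≤ 2 / n)
  linarith

/-- Both `OGW_o` and `OGW_lb` are lower bounds of `OGW`. -/
theorem OGWo_OGWlb_le_OGW (n : ℕ) (hn : 2 ≤ n)
    (C D : Matrix (Fin n) (Fin n) ℝ) (hC : C.IsHermitian) (hD : D.IsHermitian)
    (V : Matrix (Fin n) (Fin (n - 1)) ℝ)
    (hV1 : Vᵀ *ᵥ (fun _ => (1 : ℝ)) = 0) (hV2 : Vᵀ * V = 1) :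
    OGWo n C D ≤ OGW n C D ∧ OGWlb V C D hC hD ≤ OGW n C D := by
  unfold OGWo OGWlb OGW
  simp only [← Pi.one_def]
  set cost : Matrix (Fin n) (Fin n) ℝ → ℝ := fun P => trace (C * P * D * Pᵀ)
  have hne : (cost '' OE n).Nonempty := ⟨_, 1, one_mem_OE n, rfl⟩
  have hbdd : BddAbove (cost '' {P | Pᵀ * P = 1}) := by
    refine ⟨∑ i, eigDesc hC i * eigDesc hD i, ?_⟩
    rintro _ ⟨P, hP, rfl⟩
    exact trace_mul_mul_mul_transpose_le_sum_eigDesc hC hD hP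
  have hsup : sSup (cost '' OE n) ≤ sSup (cost '' {P | Pᵀ * P = 1}) :=
    csSup_le_csSup hbdd hne (Set.image_mono fun P hP => hP.1)
  have hlb : sSup (cost '' OE n) ≤ ∑ i, eigDesc (conjHerm V hC) i * eigDesc (conjHerm V hD) i
      + 2 / n * vnorm ((Vᵀ * C) *ᵥ 1) * vnorm ((Vᵀ * D) *ᵥ 1)
      + 1 / n ^ 2 * ((∑ i, ∑ j, C i j) * (∑ i, ∑ j, D i j)) := by
    refine csSup_le hne ?_
    rintro _ ⟨P, hP, rfl⟩
    exact trace_le_of_mem_OE (Nat.sub_add_cancel (by omega)) hC hD hV1 hV2 hP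
  constructor
  · gcongr
  · gcongr ?_ * ?_
    linear_combination 2 * hlb

end
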